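/- For the tractor connection on a conformal manifold, the hyperbolic-norm squared of the tractor curvature equals the squared Weyl tensor: $|F|^2_{g_+} = W^{g_+}_{abcd}W_{g_+}^{abcd}$, where $|F|^2_{g_+} = -\operatorname{Tr}(g_+^{ac}g_+^{bd}F_{ab}F_{cd})$ and the trace is over tractor endomorphism indices. -/

import Mathlib

/-!
In the splitting `Fin 1 ⊕ Fin 6 ⊕ Fin 1` the tractor curvature has vanishing top row and
vanishing right column, so in `tr (F_{ab} F_{ab}) = ∑_{I,J} F_{IJ} F_{JI}` only the terms with both
indices in the middle block survive: `tr (F_{ab}²) = tr (W_{ab}²)`.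
Since `W_{ab}` is skew in its last two indices, `-tr (W_{ab}²) = ∑_{c,d} W_{abcd}²`.
-/

namespace Matrix

variable {ι n κ R : Type*} [Fintype ι] [Fintype n] [Fintype κ]

theorem trace_mul_self_of_top_right_eq_zero [NonUnitalNonAssocSemiring R]
    (M : Matrix (ι ⊕ n ⊕ κ) (ι ⊕ n ⊕ κ) R)
    (h_top : ∀ i J, M (Sum.inl i) J = 0) (h_right : ∀ I k, M I (Sum.inr (Sum.inr k)) = 0) :
    trace (M * M) = trace (M.submatrix (Sum.inr ∘ Sum.inl) (Sum.inr ∘ Sum.inl) *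
      M.submatrix (Sum.inr ∘ Sum.inl) (Sum.inr ∘ Sum.inl)) := by
  simp [trace, mul_apply, Fintype.sum_sum_type, h_top, h_right]

theorem neg_trace_mul_self_of_transpose_eq_neg [NonUnitalNonAssocRing R] (A : Matrix n n R)
    (hA : Aᵀ = -A) : -trace (A * A) = ∑ i, ∑ j, A i j * A i j := by
  have h_entry : ∀ i j, A i j = -A j i := fun i j => by simpa using congrFun₂ hA j i
  simp only [trace, diag, mul_apply, ← Finset.sum_neg_distrib]
  refine Finset.sum_congr rfl fun i _ => Finset.sum_congr rfl fun j _ => ?_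
  rw [h_entry j i, mul_neg, neg_neg]

end Matrix

open Matrix

theorem statement18_tractor_curvature_norm
    (W : Fin 6 → Fin 6 → Fin 6 → Fin 6 → ℝ)
    (Cot : Fin 6 → Fin 6 → Fin 6 → ℝ)
    (Fmat : Fin 6 → Fin 6
      → Matrix (Fin 1 ⊕ Fin 6 ⊕ Fin 1) (Fin 1 ⊕ Fin 6 ⊕ Fin 1) ℝ)
    (hWanti2 : ∀ a b c d, W a b c d = -W a b d c)
    (hF : ∀ a b, Fmat a b = Matrix.of fun I J =>
      match I, J with
      | Sum.inr (Sum.inl c), Sum.inl _ => Cot a b c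
      | Sum.inr (Sum.inl c), Sum.inr (Sum.inl d) => W a b c d
      | Sum.inr (Sum.inr _), Sum.inr (Sum.inl d) => -Cot a b d
      | _, _ => 0) :
    -(∑ a, ∑ b, Matrix.trace (Fmat a b * Fmat a b))
      = ∑ a, ∑ b, ∑ c, ∑ d, W a b c d * W a b c d := by
  have h_trace : ∀ a b, trace (Fmat a b * Fmat a b) = trace (of (W a b) * of (W a b)) := by
    intro a b
    rw [trace_mul_self_of_top_right_eq_zero _ (by simp [hF]) (by simp [hF])]
    congr 2 <;> ext c d <;> simp [hF]
  have h_skew : ∀ a b, (of (W a b))ᵀ = -of (W a b) := fun a b => by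
    ext c d
    simp [hWanti2 a b d c]
  simp only [h_trace, ← Finset.sum_neg_distrib,
    neg_trace_mul_self_of_transpose_eq_neg _ (h_skew _ _), of_apply]
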